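/- For integers n ≥ m ≥ 2, f(S_m, K̄_n) ≤ n + min over positive integers k of max{ k + ⌈(n−1)/k⌉, 2m − 3 − k }. -/

import Mathlib

/-!
The full graph is built from an independent ground set `X ⊔ T` with `|X| = n - 1` and
`|T| = c`, centres `A ⊔ B` with `A` complete to `B`, and an apex joined to `B` and to `T`. Each
centre is joined to a window of exactly `c` ground vertices; the windows cover `X`, the windows
of `B` lie in `X`, and no window of `A` meets a window of `B`.

An independent `n`-set through a vertex is `X` plus the apex or a vertex of `T`, or a centre
together with the `(n - 1) + c - c` ground vertices outside its window. Induced stars are centred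
at `a ∈ A` (its window and `B`), at `b ∈ B` (its window, `A` and the apex) and at the apex
(`B ⊔ T`), with `c + |B|`, `c + |A| + 1` and `|B| + c` leaves. Given `k > 0` and
`M = max (k + ⌈(n - 1)/k⌉) (2m - 3 - k)`, take `c = min k (n - 1)` and `|A| + |B| = M - c`, so
that the graph has `n + M` vertices: `(M - c) c ≥ ⌈(n - 1)/k⌉ c ≥ n - 1` leaves room for the
windows, and `M + c ≥ 2m - 3` lets `A` and `B` be sized so that every star has `m - 1` leaves.
-/

open SimpleGraph Finset

/-- Every vertex of `G` lies in an induced copy of `H` (a `SimpleGraph.Embedding`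
`H ↪g G` is exactly an induced-subgraph copy of `H` in `G`). -/
def CoveredByCopies {α β : Type*} (G : SimpleGraph α) (H : SimpleGraph β) : Prop :=
  ∀ v : α, ∃ φ : H ↪g G, v ∈ Set.range ⇑φ

/-- `G` is `(H₁, H₂)`-full: for each `i`, the induced copies of `Hᵢ` cover `V(G)`. -/
def IsFullPair {α β γ : Type*} (G : SimpleGraph α) (H₁ : SimpleGraph β)
    (H₂ : SimpleGraph γ) : Prop :=
  CoveredByCopies G H₁ ∧ CoveredByCopies G H₂

/-- `f(H₁, H₂)`: the minimum order of an `(H₁, H₂)`-full graph. -/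
noncomputable def fullNum2 {β γ : Type*} (H₁ : SimpleGraph β) (H₂ : SimpleGraph γ) : ℕ :=
  sInf {N : ℕ | ∃ G : SimpleGraph (Fin N), IsFullPair G H₁ H₂}

section Copies

variable {V V' β γ : Type*} {G : SimpleGraph V}

lemma CoveredByCopies.of_iso {G' : SimpleGraph V'} {H : SimpleGraph β} (ψ : G ≃g G')
    (h : CoveredByCopies G H) : CoveredByCopies G' H := fun v ↦ by
  obtain ⟨φ, u, hu⟩ := h (ψ.symm v)
  exact ⟨ψ.toEmbedding.comp φ, u, by simp [hu]⟩

lemma fullNum2_le_card [Fintype V] {H₁ : SimpleGraph β} {H₂ : SimpleGraph γ}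
    (h : IsFullPair G H₁ H₂) : fullNum2 H₁ H₂ ≤ Fintype.card V := by
  let ψ := SimpleGraph.Iso.map (Fintype.equivFin V) G
  exact Nat.sInf_le ⟨_, h.1.of_iso ψ, h.2.of_iso ψ⟩

lemma SimpleGraph.IsIndepSet.exists_bot_embedding {s : Finset V} (hs : G.IsIndepSet ↑s) :
    ∃ φ : (⊥ : SimpleGraph (Fin #s)) ↪g G, Set.range φ = ↑s := by
  let e := s.equivFin
  refine ⟨⟨e.symm.toEmbedding.trans (Function.Embedding.subtype _), fun {i j} ↦ ?_⟩, ?_⟩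
  · simp only [bot_adj, iff_false]
    exact fun hadj ↦ hs (e.symm i).2 (e.symm j).2 (G.ne_of_adj hadj) hadj
  · exact (e.symm.surjective.range_comp _).trans Subtype.range_coe

lemma SimpleGraph.IsIndepSet.exists_star_embedding {c : V} {s : Finset V}
    (hs : G.IsIndepSet ↑s) (hcs : ↑s ⊆ G.neighborSet c) :
    ∃ φ : completeBipartiteGraph (Fin 1) (Fin #s) ↪g G, Set.range φ = insert c ↑s := by
  let e := s.equivFin
  let f : Fin 1 ⊕ Fin #s → V := Sum.elim (fun _ ↦ c) (fun j ↦ e.symm j)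
  have hleaf : ∀ j, G.Adj c (f (.inr j)) := fun j ↦ hcs (e.symm j).2
  have hf : Function.Injective f := by
    rintro (i | i) (j | j) hij
    · rw [Subsingleton.elim i j]
    · exact (G.ne_of_adj (hleaf j) hij).elim
    · exact (G.ne_of_adj (hleaf i) hij.symm).elim
    · simpa [f] using hij
  have hadj : ∀ x y, G.Adj (f x) (f y) ↔ (completeBipartiteGraph (Fin 1) (Fin #s)).Adj x y := by
    rintro (i | i) (j | j)
    · simp [f]
    · simpa [f] using hleaf j
    · simpa [f] using (hleaf i).symm
    · simp only [f, Sum.elim_inr, completeBipartiteGraph_adj, Sum.isLeft_inr, Bool.false_eq_true,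
        false_and, and_false, or_false, iff_false]
      exact fun h ↦ hs (e.symm i).2 (e.symm j).2 (G.ne_of_adj h) h
  refine ⟨⟨⟨f, hf⟩, hadj _ _⟩, ?_⟩
  simp only [Function.Embedding.coeFn_mk, RelEmbedding.coe_mk, f, Set.Sum.elim_range,
    Set.range_const, Set.insert_eq]
  exact congrArg _ ((e.symm.surjective.range_comp _).trans Subtype.range_coe)

lemma coveredByCopies_bot_of_isIndepSet {n : ℕ} (hn : 0 < n)
    (h : ∀ v, ∃ s : Finset V, n ≤ #s ∧ v ∈ s ∧ G.IsIndepSet s) :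
    CoveredByCopies G (⊥ : SimpleGraph (Fin n)) := fun v ↦ by
  obtain ⟨s, hns, hv, hs⟩ := h v
  obtain ⟨t, hvt, hts, rfl⟩ := exists_subsuperset_card_eq (singleton_subset_iff.2 hv) hn hns
  have ht : G.IsIndepSet ↑t := hs.mono (coe_subset.2 hts)
  obtain ⟨φ, hφ⟩ := ht.exists_bot_embedding
  exact ⟨φ, hφ ▸ hvt (mem_singleton_self v)⟩

lemma coveredByCopies_star_of_isIndepSet {k : ℕ} (hk : 0 < k)
    (h : ∀ v, ∃ c, ∃ s : Finset V, k ≤ #s ∧ (v = c ∨ v ∈ s) ∧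
      G.IsIndepSet s ∧ ↑s ⊆ G.neighborSet c) :
    CoveredByCopies G (completeBipartiteGraph (Fin 1) (Fin k)) := fun v ↦ by
  obtain ⟨c, s, hks, hv, hs, hcs⟩ := h v
  obtain ⟨t, hts, rfl, hvt⟩ : ∃ t ⊆ s, #t = k ∧ (v ∈ s → v ∈ t) := by
    by_cases hvs : v ∈ s
    · obtain ⟨t, hvt, hts, hkt⟩ :=
        exists_subsuperset_card_eq (singleton_subset_iff.2 hvs) hk hks
      exact ⟨t, hts, hkt, fun _ ↦ hvt (mem_singleton_self v)⟩
    · obtain ⟨t, hts, hkt⟩ := exists_subset_card_eq hks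
      exact ⟨t, hts, hkt, hvs.elim⟩
  have ht : G.IsIndepSet ↑t := hs.mono (coe_subset.2 hts)
  obtain ⟨φ, hφ⟩ := ht.exists_star_embedding ((coe_subset.2 hts).trans hcs)
  refine ⟨φ, hφ ▸ ?_⟩
  rcases hv with rfl | hv
  exacts [Set.mem_insert _ _, Set.mem_insert_of_mem _ (hvt hv)]

end Copies

lemma Finset.disjoint_image_image {α β γ : Type*} [DecidableEq γ] {f : α → γ} {g : β → γ}
    {s : Finset α} {t : Finset β} (h : ∀ a b, f a ≠ g b) : Disjoint (s.image f) (t.image g) := by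
  simp only [Finset.disjoint_left, mem_image]
  rintro _ ⟨a, -, rfl⟩ ⟨b, -, hb⟩
  exact h a b hb.symm

lemma Finset.exists_cover_of_card_le_mul {α : Type*} [DecidableEq α] {c : ℕ} {t : Finset α}
    (hct : c ≤ #t) : ∀ {p : ℕ} {s : Finset α}, s ⊆ t → #s ≤ p * c →
      ∃ W : Fin p → Finset α, (∀ i, W i ⊆ t ∧ #(W i) = c) ∧ ∀ x ∈ s, ∃ i, x ∈ W i
  | 0, s, _, hs => ⟨Fin.elim0, (·.elim0), fun x hx ↦ by simp_all⟩
  | p + 1, s, hst, hs => by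
    obtain ⟨r, hrs, hr⟩ := exists_subset_card_eq (min_le_right c #s)
    obtain ⟨r', hrr', hr't, hr'⟩ :=
      exists_subsuperset_card_eq (hrs.trans hst) (hr.trans_le (min_le_left _ _)) hct
    obtain ⟨W, hW, hcov⟩ := exists_cover_of_card_le_mul hct (sdiff_subset.trans hst)
      (show #(s \ r) ≤ p * c by rw [card_sdiff_of_subset hrs, hr]; rw [add_one_mul] at hs; omega)
    refine ⟨Fin.cons r' W, Fin.forall_fin_succ.2 ⟨⟨hr't, hr'⟩, hW⟩, fun x hx ↦ ?_⟩
    by_cases hxr : x ∈ r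
    · exact ⟨0, hrr' hxr⟩
    · obtain ⟨i, hi⟩ := hcov x (mem_sdiff.2 ⟨hx, hxr⟩)
      exact ⟨i.succ, by simpa using hi⟩

namespace StarEmptyFull

inductive Vertex (X T A B : Type*)
  | z : X ⊕ T → Vertex X T A B
  | a : A → Vertex X T A B
  | b : B → Vertex X T A B
  | apex : Vertex X T A B

variable {X T A B : Type*}

def Vertex.equivOption : Vertex X T A B ≃ Option ((X ⊕ T) ⊕ A ⊕ B) where
  toFun
    | .z y => some (.inl y)
    | .a i => some (.inr (.inl i))
    | .b j => some (.inr (.inr j))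
    | .apex => none
  invFun
    | some (.inl y) => .z y
    | some (.inr (.inl i)) => .a i
    | some (.inr (.inr j)) => .b j
    | none => .apex
  left_inv v := by cases v <;> rfl
  right_inv
    | some (.inl _) | some (.inr (.inl _)) | some (.inr (.inr _)) | none => rfl

instance [Fintype X] [Fintype T] [Fintype A] [Fintype B] : Fintype (Vertex X T A B) :=
  Fintype.ofEquiv _ Vertex.equivOption.symm

lemma card_vertex [Fintype X] [Fintype T] [Fintype A] [Fintype B] :
    Fintype.card (Vertex X T A B) =
      Fintype.card X + Fintype.card T + Fintype.card A + Fintype.card B + 1 := by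
  simp [Fintype.card_congr Vertex.equivOption, Fintype.card_sum, add_assoc]

def Vertex.centre : A ⊕ B → Vertex X T A B := Sum.elim .a .b

def Link (W : A ⊕ B → Finset (X ⊕ T)) : Vertex X T A B → Vertex X T A B → Prop
  | .a i, .z y => y ∈ W (.inl i)
  | .b j, .z y => y ∈ W (.inr j)
  | .a _, .b _ => True
  | .apex, .b _ => True
  | .apex, .z y => y.isRight
  | _, _ => False

def graph (W : A ⊕ B → Finset (X ⊕ T)) : SimpleGraph (Vertex X T A B) :=
  SimpleGraph.fromRel (Link W)

open scoped Classical

noncomputable def leavesA [Fintype B] (W : A ⊕ B → Finset (X ⊕ T)) (i : A) :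
    Finset (Vertex X T A B) :=
  (W (.inl i)).image .z ∪ univ.image .b

noncomputable def leavesB [Fintype A] (W : A ⊕ B → Finset (X ⊕ T)) (j : B) :
    Finset (Vertex X T A B) :=
  insert .apex ((W (.inr j)).image .z ∪ univ.image .a)

noncomputable def leavesApex [Fintype T] [Fintype B] : Finset (Vertex X T A B) :=
  univ.image .b ∪ univ.image fun l ↦ .z (.inr l)

variable {W : A ⊕ B → Finset (X ⊕ T)}

@[simp] lemma graph_adj {u v : Vertex X T A B} :
    (graph W).Adj u v ↔ u ≠ v ∧ (Link W u v ∨ Link W v u) :=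
  SimpleGraph.fromRel_adj _ _ _

lemma not_link_z {y : X ⊕ T} {v : Vertex X T A B} : ¬ Link W (.z y) v := by
  cases v <;> exact id

lemma isIndepSet_insert_image_inl [Fintype X] {v : Vertex X T A B}
    (hv : ∀ u, ¬ Link W v (.z (.inl u))) :
    (graph W).IsIndepSet ↑(insert v (univ.image fun u ↦ Vertex.z (.inl u))) := by
  rintro u hu w hw - huw
  simp only [coe_insert, coe_image, coe_univ, Set.image_univ, Set.mem_insert_iff,
    Set.mem_range] at hu hw
  rcases hu with rfl | ⟨u, rfl⟩ <;> rcases hw with rfl | ⟨w, rfl⟩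
  · exact huw.1 rfl
  · exact huw.2.elim (hv w) not_link_z
  · exact huw.2.elim not_link_z (hv u)
  · exact huw.2.elim not_link_z not_link_z

lemma card_insert_image_inl [Fintype X] {v : Vertex X T A B} (hv : ∀ u, v ≠ .z (.inl u)) :
    #(insert v (univ.image fun u ↦ Vertex.z (.inl u))) = Fintype.card X + 1 := by
  rw [card_insert_of_notMem (by simpa using fun u ↦ (hv u).symm),
    card_image_of_injective _ fun _ _ h ↦ Sum.inl_injective (Vertex.z.inj h), card_univ]

lemma isIndepSet_insert_centre [Fintype X] [Fintype T] (w : A ⊕ B) :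
    (graph W).IsIndepSet
      ↑(insert (Vertex.centre w : Vertex X T A B) ((W w)ᶜ.image Vertex.z)) := by
  rintro u hu v hv - huv
  simp only [coe_insert, coe_image, coe_compl, Set.mem_insert_iff, Set.mem_image,
    Set.mem_compl_iff, mem_coe] at hu hv
  rcases hu with rfl | ⟨u, hu, rfl⟩ <;> rcases hv with rfl | ⟨v, hv, rfl⟩ <;>
    rcases w with i | j <;> simp_all [Link, Vertex.centre]

lemma card_insert_centre [Fintype X] [Fintype T] (w : A ⊕ B) (hw : #(W w) = Fintype.card T) :
    #(insert (Vertex.centre w : Vertex X T A B) ((W w)ᶜ.image Vertex.z)) =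
      Fintype.card X + 1 := by
  rw [card_insert_of_notMem (by rcases w with i | j <;> simp [Vertex.centre]),
    card_image_of_injective _ fun _ _ ↦ Vertex.z.inj, card_compl, hw, Fintype.card_sum]
  omega

lemma coveredByCopies_bot [Fintype X] [Fintype T] (hW : ∀ w, #(W w) = Fintype.card T) {n : ℕ}
    (hn : Fintype.card X + 1 = n) : CoveredByCopies (graph W) (⊥ : SimpleGraph (Fin n)) := by
  subst hn
  refine coveredByCopies_bot_of_isIndepSet (Nat.succ_pos _) fun v ↦ ?_
  match v with
  | .a i => exact ⟨_, (card_insert_centre (.inl i) (hW _)).ge, mem_insert_self _ _,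
      isIndepSet_insert_centre _⟩
  | .b j => exact ⟨_, (card_insert_centre (.inr j) (hW _)).ge, mem_insert_self _ _,
      isIndepSet_insert_centre _⟩
  | .z (.inl _) | .apex => exact ⟨_, (card_insert_image_inl (v := .apex) (by simp)).ge,
      by simp, isIndepSet_insert_image_inl (by simp [Link])⟩
  | .z (.inr l) => exact ⟨_, (card_insert_image_inl (v := .z (.inr l)) (by simp)).ge,
      by simp, isIndepSet_insert_image_inl fun _ ↦ id⟩

lemma isStar_leavesA [Fintype B] (hdisj : ∀ i j, Disjoint (W (.inl i)) (W (.inr j))) (i : A) :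
    (graph W).IsIndepSet ↑(leavesA W i) ∧ ↑(leavesA W i) ⊆ (graph W).neighborSet (.a i) := by
  refine ⟨?_, ?_⟩
  · rintro u hu v hv - huv
    simp only [leavesA, coe_union, coe_image, coe_univ, Set.image_univ, Set.mem_union,
      Set.mem_image, mem_coe, Set.mem_range] at hu hv
    rcases hu with ⟨u, hu, rfl⟩ | ⟨u, rfl⟩ <;> rcases hv with ⟨v, hv, rfl⟩ | ⟨v, rfl⟩ <;>
      simp [Link] at huv
    exacts [disjoint_left.1 (hdisj _ _) hu huv, disjoint_left.1 (hdisj _ _) hv huv]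
  · intro u hu
    simp only [leavesA, coe_union, coe_image, coe_univ, Set.image_univ, Set.mem_union,
      Set.mem_image, mem_coe, Set.mem_range] at hu
    rcases hu with ⟨u, hu, rfl⟩ | ⟨u, rfl⟩ <;> simp_all [Link]

lemma isStar_leavesB [Fintype A] (hdisj : ∀ i j, Disjoint (W (.inl i)) (W (.inr j)))
    (hBX : ∀ j, ∀ y ∈ W (.inr j), y.isLeft) (j : B) :
    (graph W).IsIndepSet ↑(leavesB W j) ∧ ↑(leavesB W j) ⊆ (graph W).neighborSet (.b j) := by
  refine ⟨?_, ?_⟩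
  · rintro u hu v hv - huv
    simp only [leavesB, coe_insert, coe_union, coe_image, coe_univ, Set.image_univ,
      Set.mem_insert_iff, Set.mem_union, Set.mem_image, mem_coe, Set.mem_range] at hu hv
    rcases hu with rfl | ⟨u, hu, rfl⟩ | ⟨u, rfl⟩ <;>
      rcases hv with rfl | ⟨v, hv, rfl⟩ | ⟨v, rfl⟩ <;> simp [Link] at huv
    exacts [by cases v <;> simp_all, by cases u <;> simp_all,
      disjoint_right.1 (hdisj _ _) hu huv, disjoint_right.1 (hdisj _ _) hv huv]
  · intro u hu
    simp only [leavesB, coe_insert, coe_union, coe_image, coe_univ, Set.image_univ,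
      Set.mem_insert_iff, Set.mem_union, Set.mem_image, mem_coe, Set.mem_range] at hu
    rcases hu with rfl | ⟨u, hu, rfl⟩ | ⟨u, rfl⟩ <;> simp_all [Link]

lemma isStar_leavesApex [Fintype T] [Fintype B] (hBX : ∀ j, ∀ y ∈ W (.inr j), y.isLeft) :
    (graph W).IsIndepSet ↑(leavesApex : Finset (Vertex X T A B)) ∧
      ↑(leavesApex : Finset (Vertex X T A B)) ⊆ (graph W).neighborSet .apex := by
  refine ⟨?_, ?_⟩
  · rintro u hu v hv - huv
    simp only [leavesApex, coe_union, coe_image, coe_univ, Set.image_univ, Set.mem_union,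
      Set.mem_range] at hu hv
    rcases hu with ⟨u, rfl⟩ | ⟨u, rfl⟩ <;> rcases hv with ⟨v, rfl⟩ | ⟨v, rfl⟩ <;>
      simp_all [Link]
  · intro u hu
    simp only [leavesApex, coe_union, coe_image, coe_univ, Set.image_univ, Set.mem_union,
      Set.mem_range] at hu
    rcases hu with ⟨u, rfl⟩ | ⟨u, rfl⟩ <;> simp_all [Link]

lemma card_leavesA [Fintype T] [Fintype B] {i : A} (hW : #(W (.inl i)) = Fintype.card T) :
    #(leavesA W i) = Fintype.card T + Fintype.card B := by
  rw [leavesA, card_union_of_disjoint (disjoint_image_image (by simp)),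
    card_image_of_injective _ fun _ _ ↦ Vertex.z.inj,
    card_image_of_injective _ fun _ _ ↦ Vertex.b.inj, hW, card_univ]

lemma card_leavesB [Fintype T] [Fintype A] {j : B} (hW : #(W (.inr j)) = Fintype.card T) :
    #(leavesB W j) = Fintype.card T + Fintype.card A + 1 := by
  rw [leavesB, card_insert_of_notMem (by simp),
    card_union_of_disjoint (disjoint_image_image (by simp)),
    card_image_of_injective _ fun _ _ ↦ Vertex.z.inj,
    card_image_of_injective _ fun _ _ ↦ Vertex.a.inj, hW, card_univ]

lemma card_leavesApex [Fintype T] [Fintype B] :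
    #(leavesApex : Finset (Vertex X T A B)) = Fintype.card B + Fintype.card T := by
  rw [leavesApex, card_union_of_disjoint (disjoint_image_image (by simp)),
    card_image_of_injective _ fun _ _ ↦ Vertex.b.inj,
    card_image_of_injective _ fun _ _ h ↦ Sum.inr_injective (Vertex.z.inj h), card_univ,
    card_univ]

lemma coveredByCopies_star [Fintype T] [Fintype A] [Fintype B] [Nonempty B]
    (hW : ∀ w, #(W w) = Fintype.card T) (hdisj : ∀ i j, Disjoint (W (.inl i)) (W (.inr j)))
    (hBX : ∀ j, ∀ y ∈ W (.inr j), y.isLeft) (hcover : ∀ u, ∃ w, .inl u ∈ W w) {k : ℕ}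
    (hk : 0 < k) (hkA : k ≤ Fintype.card T + Fintype.card A + 1)
    (hkB : k ≤ Fintype.card T + Fintype.card B) :
    CoveredByCopies (graph W) (completeBipartiteGraph (Fin 1) (Fin k)) := by
  refine coveredByCopies_star_of_isIndepSet hk fun v ↦ ?_
  match v with
  | .z (.inl u) =>
    obtain ⟨i | j, hu⟩ := hcover u
    · exact ⟨.a i, _, hkB.trans_eq (card_leavesA (hW _)).symm, .inr (by simp [leavesA, hu]),
        isStar_leavesA hdisj i⟩
    · exact ⟨.b j, _, hkA.trans_eq (card_leavesB (hW _)).symm, .inr (by simp [leavesB, hu]),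
        isStar_leavesB hdisj hBX j⟩
  | .a i =>
    let j : B := Classical.arbitrary B
    exact ⟨.b j, _, hkA.trans_eq (card_leavesB (hW _)).symm, .inr (by simp [leavesB]),
      isStar_leavesB hdisj hBX j⟩
  | .b _ | .z (.inr _) | .apex =>
    exact ⟨.apex, _, hkB.trans_eq (by rw [card_leavesApex, add_comm]),
      by simp [leavesApex], isStar_leavesApex hBX⟩

open Fintype in
lemma exists_windows [Fintype X] [Fintype T] [Fintype A] [Fintype B] [Nonempty B]
    (hTX : card T ≤ card X) (hX : card X ≤ (card A + card B) * card T) :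
    ∃ W : A ⊕ B → Finset (X ⊕ T), (∀ w, #(W w) = card T) ∧
      (∀ i j, Disjoint (W (.inl i)) (W (.inr j))) ∧ (∀ j, ∀ y ∈ W (.inr j), y.isLeft) ∧
      ∀ u, ∃ w, .inl u ∈ W w := by
  -- `B`-windows cover `min (|B| c) |X|` vertices of `X`; `A`-windows cover the rest,
  -- topped up from `T`.
  have hTB : card T ≤ card B * card T := Nat.le_mul_of_pos_left _ card_pos
  obtain ⟨XB, -, hXB⟩ := exists_subset_card_eq (s := (univ : Finset X))
    (n := min (card B * card T) (card X)) (by simp)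
  obtain ⟨WB, hWB, hcovB⟩ := exists_cover_of_card_le_mul (p := card B) (by omega) subset_rfl
    (hXB.trans_le (min_le_left _ _))
  obtain ⟨WA, hWA, hcovA⟩ := exists_cover_of_card_le_mul (p := card A) (c := card T)
    (t := XBᶜ.disjSum (univ : Finset T)) (by simp [card_disjSum])
    (disjSum_mono subset_rfl (empty_subset _))
    (by rw [card_disjSum, Finset.card_empty, Finset.card_compl, hXB]; rw [add_mul] at hX; omega)
  refine ⟨Sum.elim (fun i ↦ WA (equivFin A i)) (fun j ↦ (WB (equivFin B j)).disjSum ∅),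
    ?_, ?_, ?_, ?_⟩
  · rintro (i | j) <;> simp [hWA, hWB]
  · intro i j
    rw [Finset.disjoint_left]
    rintro (u | l) hyA hyB
    · exact mem_compl.1 (inl_mem_disjSum.1 ((hWA _).1 hyA)) ((hWB _).1 (inl_mem_disjSum.1 hyB))
    · simp at hyB
  · intro j
    rintro (u | l) h
    · rfl
    · simp at h
  · intro u
    by_cases hu : u ∈ XB
    · obtain ⟨j, hj⟩ := hcovB u hu
      exact ⟨.inr ((equivFin B).symm j), by simpa using hj⟩
    · obtain ⟨i, hi⟩ := hcovA (.inl u) (by simpa using hu)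
      exact ⟨.inl ((equivFin A).symm i), by simpa using hi⟩

lemma exists_params {m N k : ℕ} (hm : 2 ≤ m) (hmN : m ≤ N + 1) (hk : 0 < k) :
    ∃ c α β : ℕ, 0 < β ∧ c ≤ N ∧ N ≤ (α + β) * c ∧ m - 1 ≤ c + α + 1 ∧ m - 1 ≤ c + β ∧
      α + β + c = max (k + N ⌈/⌉ k) (2 * m - 3 - k) := by
  set t := N ⌈/⌉ k
  set M := max (k + t) (2 * m - 3 - k)
  have hkt : N ≤ k * t := by simpa using le_smul_ceilDiv (b := N) hk
  have ht : 0 < t := Nat.pos_of_ne_zero fun h ↦ by rw [h, mul_zero] at hkt; omega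
  have hM : k + t ≤ M ∧ 2 * m - 3 - k ≤ M := ⟨le_max_left _ _, le_max_right _ _⟩
  have hct : N ≤ min k N * t := by
    rcases min_cases k N with ⟨h, -⟩ | ⟨h, -⟩ <;> rw [h]
    exacts [hkt, Nat.le_mul_of_pos_right N ht]
  refine ⟨min k N, M - min k N - max 1 (m - 1 - min k N), max 1 (m - 1 - min k N), by omega,
    min_le_right _ _, ?_, by omega, by omega, by omega⟩
  calc N ≤ min k N * t := hct
    _ ≤ min k N * (M - min k N) := Nat.mul_le_mul_left _ (by omega)
    _ = _ := by rw [mul_comm]; congr 1; omega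

lemma fullNum2_le_of_params {k N c α β : ℕ} (hk : 0 < k) (hβ : 0 < β) (hcN : c ≤ N)
    (hN : N ≤ (α + β) * c) (hkA : k ≤ c + α + 1) (hkB : k ≤ c + β) :
    fullNum2 (completeBipartiteGraph (Fin 1) (Fin k)) (⊥ : SimpleGraph (Fin (N + 1))) ≤
      N + 1 + (α + β + c) := by
  have : Nonempty (Fin β) := ⟨⟨0, hβ⟩⟩
  obtain ⟨W, hW, hdisj, hBX, hcover⟩ :=
    exists_windows (X := Fin N) (T := Fin c) (A := Fin α) (B := Fin β) (by simpa) (by simpa)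
  calc _ ≤ Fintype.card (Vertex (Fin N) (Fin c) (Fin α) (Fin β)) :=
        fullNum2_le_card (G := graph W) ⟨coveredByCopies_star hW hdisj hBX hcover hk
          (by simpa) (by simpa), coveredByCopies_bot hW (by simp)⟩
    _ = N + 1 + (α + β + c) := by simp only [card_vertex, Fintype.card_fin]; omega

end StarEmptyFull

/-- **Lemma 4.2.** For `n ≥ m ≥ 2`,
`f(S_m, K̄_n) ≤ n + min_k max{k + ⌈(n−1)/k⌉, 2m − 3 − k}`,
the minimum being over positive integers `k`. -/
theorem fullNum2_star_empty_upper (m n : ℕ) (hm : 2 ≤ m) (hmn : m ≤ n) :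
    fullNum2 (completeBipartiteGraph (Fin 1) (Fin (m - 1))) (⊥ : SimpleGraph (Fin n)) ≤
      n + sInf {x : ℕ | ∃ k : ℕ, 0 < k ∧
        x = max (k + (n - 1) ⌈/⌉ k) (2 * m - 3 - k)} := by
  obtain ⟨N, rfl⟩ : ∃ N, n = N + 1 := ⟨n - 1, by omega⟩
  obtain ⟨k, hk, hkM⟩ := Nat.sInf_mem (s := {x : ℕ | ∃ k : ℕ, 0 < k ∧
    x = max (k + (N + 1 - 1) ⌈/⌉ k) (2 * m - 3 - k)}) ⟨_, 1, one_pos, rfl⟩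
  obtain ⟨c, α, β, hβ, hcN, hN, hkA, hkB, hM⟩ := StarEmptyFull.exists_params hm hmn hk
  rw [hkM, Nat.add_sub_cancel, ← hM]
  exact StarEmptyFull.fullNum2_le_of_params (by omega) hβ hcN hN hkA hkB
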